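/- arXiv:1801.05308 — 3 statements merged into one kernel-verified Lean document; each statement's English description precedes it below -/
import Mathlib

section
/- Suppose [D,U] = λU and U is invertible. Then B(n,λ,U,D) = (DU⁻¹)^n U^n, where B(n,λ,U,D) = Σ_{k=0}^{n} C(n,k) (∏_{j=0}^{k-1}(D - U + jλI)) U^{n-k} with products ordered left to right in increasing j. -/
/-- The binomial-type combination `B(n, λ, U, D)`, with the products ordered
left to right in increasing `j`. -/
noncomputable def binomB {K A : Type*} [Field K] [Ring A] [Algebra K A]
    (n : ℕ) (l : K) (U D : A) : A :=
  ∑ k ∈ Finset.range (n + 1),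
    n.choose k •
      (((List.range k).map (fun j : ℕ => D - U + ((j : K) * l) • (1 : A))).prod * U ^ (n - k))

section Aux

variable {K A : Type*} [Field K] [Ring A] [Algebra K A]
variable (l : K) (D : A) (U : Aˣ)

/-- shorthand for the factors -/
private noncomputable def Aj (j : ℕ) : A := D - (U : A) + ((j : K) * l) • (1 : A)

private noncomputable def Pk (k : ℕ) : A := ((List.range k).map (Aj l D U)).prod

private lemma Pk_succ (k : ℕ) : Pk l D U (k + 1) = Pk l D U k * Aj l D U k := by
  simp [Pk, List.range_succ]

private lemma hUD (h : D * (U : A) - (U : A) * D = l • (U : A)) :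
    (U : A) * D = D * (U : A) - l • (U : A) := by
  rw [eq_sub_iff_add_eq, ← h]; abel

private lemma comm1 (h : D * (U : A) - (U : A) * D = l • (U : A)) (c : K) :
    (U : A) * (D - (U : A) + (c + l) • (1 : A))
      = (D - (U : A) + c • (1 : A)) * (U : A) := by
  have h' := hUD l D U h
  rw [mul_add, mul_sub, add_mul, sub_mul, h', mul_smul_comm, smul_mul_assoc,
    mul_one, one_mul, add_smul]
  abel

private lemma commPow (h : D * (U : A) - (U : A) * D = l • (U : A)) (m : ℕ) (c : K) :
    (U : A) ^ m * (D - (U : A) + (c + (m : K) * l) • (1 : A))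
      = (D - (U : A) + c • (1 : A)) * (U : A) ^ m := by
  induction m generalizing c with
  | zero => simp
  | succ m ih =>
    have key : (c + ((m + 1 : ℕ) : K) * l) = (c + (m : K) * l) + l := by push_cast; ring
    rw [key, pow_succ, mul_assoc, comm1 l D U h (c + (m : K) * l), ← mul_assoc, ih,
      mul_assoc, ← pow_succ]

private lemma Dpow (h : D * (U : A) - (U : A) * D = l • (U : A)) (m : ℕ) :
    D * (U : A) ^ m = (U : A) ^ m * (D + ((m : K) * l) • (1 : A)) := by
  induction m with
  | zero => simp
  | succ m ih =>
    have hDU : D * (U : A) = (U : A) * (D + l • (1 : A)) := by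
      rw [mul_add, mul_smul_comm, mul_one, ← h]; abel
    have hs : D + (((m + 1 : ℕ) : K) * l) • (1 : A)
        = (D + ((m : K) * l) • (1 : A)) + l • (1 : A) := by
      push_cast
      rw [show ((m : K) + 1) * l = (m : K) * l + l from by ring, add_smul, add_assoc]
    rw [pow_succ', ← mul_assoc, hDU, mul_assoc, add_mul, smul_mul_assoc, one_mul, ih,
      hs, mul_assoc]
    congr 1
    rw [mul_add ((U : A) ^ m) _ (l • (1 : A)), mul_smul_comm, mul_one]

private lemma pascal_sum {M : Type*} [AddCommMonoid M] (n : ℕ) (X : ℕ → M) :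
    ∑ k ∈ Finset.range (n + 2), (n + 1).choose k • X k
      = ∑ k ∈ Finset.range (n + 1), n.choose k • X (k + 1)
        + ∑ k ∈ Finset.range (n + 1), n.choose k • X k := by
  rw [Finset.sum_range_succ' (fun k => (n + 1).choose k • X k)]
  simp only [Nat.choose_succ_succ, add_smul, Nat.choose_zero_right, one_smul]
  rw [Finset.sum_add_distrib, add_assoc]
  congr 1
  have : ∑ k ∈ Finset.range (n + 1), n.choose (k + 1) • X (k + 1) + X 0
      = ∑ k ∈ Finset.range (n + 2), n.choose k • X k := by
    rw [Finset.sum_range_succ' (fun k => n.choose k • X k)]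
    simp
  rw [this, Finset.sum_range_succ]
  simp

end Aux

theorem binomB_eq_of_invertible
    {K A : Type*} [Field K] [CharZero K] [Ring A] [Algebra K A]
    (l : K) (D : A) (U : Aˣ) (h : D * (U : A) - (U : A) * D = l • (U : A)) (n : ℕ) :
    binomB n l (U : A) D = (D * (↑U⁻¹ : A)) ^ n * (U : A) ^ n := by
  -- both sides satisfy X (n+1) = X n * (D + (n*l) • 1), with X 0 = 1
  induction n with
  | zero => simp [binomB]
  | succ n ih =>
    -- RHS recursion
    have hRHS : (D * (↑U⁻¹ : A)) ^ (n + 1) * (U : A) ^ (n + 1)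
        = (D * (↑U⁻¹ : A)) ^ n * (U : A) ^ n * (D + ((n : K) * l) • (1 : A)) := by
      have : (D * (↑U⁻¹ : A)) ^ (n + 1) * (U : A) ^ (n + 1)
          = (D * (↑U⁻¹ : A)) ^ n * (D * ((↑U⁻¹ : A) * (U : A)) * (U : A) ^ n) := by
        rw [pow_succ, pow_succ']; simp [mul_assoc]
      rw [this, U.inv_mul, mul_one, Dpow l D U h n, ← mul_assoc]
    -- LHS recursion
    have hLHS : binomB (n + 1) l (U : A) D
        = binomB n l (U : A) D * (D + ((n : K) * l) • (1 : A)) := by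
      have hsplit : D + ((n : K) * l) • (1 : A) = Aj l D U n + (U : A) := by
        simp [Aj]; abel
      have hterm : ∀ k ∈ Finset.range (n + 1),
          (n.choose k • (Pk l D U k * (U : A) ^ (n - k))) * (Aj l D U n + (U : A))
            = n.choose k • (Pk l D U (k + 1) * (U : A) ^ (n - k))
              + n.choose k • (Pk l D U k * (U : A) ^ (n + 1 - k)) := by
        intro k hk
        rw [Finset.mem_range, Nat.lt_succ_iff] at hk
        have hc : (U : A) ^ (n - k) * Aj l D U n = Aj l D U k * (U : A) ^ (n - k) := by
          have := commPow l D U h (n - k) ((k : K) * l)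
          have hcast : ((k : K) * l + ((n - k : ℕ) : K) * l) = (n : K) * l := by
            rw [Nat.cast_sub hk]; ring
          rw [hcast] at this
          simpa [Aj] using this
        rw [mul_add, smul_mul_assoc, smul_mul_assoc, mul_assoc, hc, ← mul_assoc,
          ← Pk_succ,
          show Pk l D U k * (U : A) ^ (n - k) * (U : A)
              = Pk l D U k * (U : A) ^ (n + 1 - k) from by
            rw [mul_assoc, ← pow_succ, Nat.sub_add_comm hk]]
      have hBsum : binomB n l (U : A) D * (D + ((n : K) * l) • (1 : A))
          = ∑ k ∈ Finset.range (n + 1),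
              (n.choose k • (Pk l D U (k + 1) * (U : A) ^ (n - k))
                + n.choose k • (Pk l D U k * (U : A) ^ (n + 1 - k))) := by
        rw [binomB, Finset.sum_mul, hsplit]
        exact Finset.sum_congr rfl (fun k hk => hterm k hk)
      rw [hBsum, Finset.sum_add_distrib]
      have hP : binomB (n + 1) l (U : A) D
          = ∑ k ∈ Finset.range (n + 2),
              (n + 1).choose k • (Pk l D U k * (U : A) ^ (n + 1 - k)) := by
        rfl
      rw [hP, pascal_sum n (fun k => Pk l D U k * (U : A) ^ (n + 1 - k))]
      congr 1
      exact Finset.sum_congr rfl (fun k _ => by rw [Nat.succ_sub_succ])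
    rw [hLHS, hRHS, ih]
end

section
/- Let D = d/dx act on smooth complex-valued functions on ℝ, let Ẽ_λ denote multiplication by e^{λx}, and fix λ ∈ ℂ. Then for all n > 0 and all integers j with 0 ≤ j ≤ n-1, the function Σ_{k=0}^{n} C(n,k) [(D - Ẽ_λ)∘(D - Ẽ_λ + λ)∘…∘(D - Ẽ_λ + (k-1)λ)] (e^{(n-k)λx} · e^{-jλx}) is identically zero, i.e., B(n,λ,Ẽ_λ,D) applied to the function e^{-jλx} is 0. -/
noncomputable section

def SmoothC : Submodule ℂ (ℝ → ℂ) where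
  carrier := {f | ContDiff ℝ (⊤ : ℕ∞) f}
  add_mem' := fun {a b} (ha : ContDiff ℝ (⊤ : ℕ∞) a) (hb : ContDiff ℝ (⊤ : ℕ∞) b) => ha.add hb
  zero_mem' := (contDiff_const : ContDiff ℝ (⊤ : ℕ∞) fun _ => (0 : ℂ))
  smul_mem' := fun c f (hf : ContDiff ℝ (⊤ : ℕ∞) f) => hf.const_smul c

lemma smoothC_contDiff (f : SmoothC) : ContDiff ℝ (⊤ : ℕ∞) (f : ℝ → ℂ) := f.2

lemma smoothC_mem (f : ℝ → ℂ) (hf : ContDiff ℝ (⊤ : ℕ∞) f) : f ∈ SmoothC := hf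

/-- Differentiation `d/dx` as a linear operator on smooth functions. -/
def Dop : Module.End ℂ SmoothC where
  toFun f := ⟨deriv f, smoothC_mem _ (contDiff_infty_iff_deriv.mp (smoothC_contDiff f)).2⟩
  map_add' f g := by
    ext x
    exact deriv_add ((smoothC_contDiff f).differentiable (by simp) x)
      ((smoothC_contDiff g).differentiable (by simp) x)
  map_smul' c f := by
    ext x
    exact deriv_const_smul c ((smoothC_contDiff f).differentiable (by simp) x)

/-- Multiplication by a smooth function as a linear operator on smooth functions. -/
def Mop (g : ℝ → ℂ) (hg : ContDiff ℝ (⊤ : ℕ∞) g) : Module.End ℂ SmoothC where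
  toFun f := ⟨g * f, smoothC_mem _ (hg.mul (smoothC_contDiff f))⟩
  map_add' f g' := by ext x; simp [mul_add]
  map_smul' c f := by ext x; simp; ring

lemma expSmooth (l : ℂ) : ContDiff ℝ (⊤ : ℕ∞) (fun x : ℝ => Complex.exp (l * x)) :=
  ((Complex.contDiff_exp (𝕜 := ℂ)).restrict_scalars ℝ).comp
    (contDiff_const.mul Complex.ofRealCLM.contDiff)

end

/-! The relation `[D, U] = λU` gives `U ^ m * (D + mλ) = D * U ^ m`, and with it Pascal's rule
collapses `B(n, λ, U, D)` to the product `D (D + λ) ⋯ (D + (n-1)λ)`, in which `U` no longer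
occurs. Since `e^{-jλx}` is an eigenfunction of `D` with eigenvalue `-jλ`, the factor `D + jλ`
kills it. -/

open Finset Polynomial

section Commutator

variable {K A : Type*} [Field K] [Ring A] [Algebra K A] {l : K} {U D : A}

lemma pow_mul_add_smul_one_of_commutator (h : D * U - U * D = l • U) (m : ℕ) :
    U ^ m * (D + ((m : K) * l) • 1) = D * U ^ m := by
  have hUD : U * D + l • U = D * U := by rw [← h]; abel
  induction m with
  | zero => simp
  | succ m ih =>
    calc U ^ (m + 1) * (D + (((m + 1 : ℕ) : K) * l) • 1)
        = U ^ m * (U * D + l • U) + ((m : K) * l) • (U ^ m * U) := by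
          push_cast
          simp only [pow_succ, mul_add, add_mul, one_mul, add_smul, mul_smul_comm, mul_one,
            mul_assoc]
          abel
      _ = (U ^ m * (D + ((m : K) * l) • 1)) * U := by
          rw [hUD, mul_add, add_mul, mul_smul_comm, mul_one, smul_mul_assoc, mul_assoc]
      _ = D * U ^ (m + 1) := by rw [ih, mul_assoc, pow_succ]

lemma pow_mul_add_smul_one_of_add_eq {k m n : ℕ} (h : D * U - U * D = l • U) (hn : k + m = n) :
    U ^ m * (D + ((n : K) * l) • 1) = (D - U + ((k : K) * l) • 1) * U ^ m + U ^ (m + 1) := by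
  have hsplit : D + ((n : K) * l) • (1 : A) = (D + ((m : K) * l) • 1) + ((k : K) * l) • 1 := by
    rw [← hn]; push_cast; rw [add_assoc, ← add_smul]; ring_nf
  rw [hsplit, mul_add, pow_mul_add_smul_one_of_commutator h, pow_succ']
  simp only [add_mul, sub_mul, mul_smul_comm, smul_mul_assoc, mul_one, one_mul]
  abel

lemma binomB_eq_sum_antidiagonal (n : ℕ) :
    binomB n l U D = ∑ km ∈ antidiagonal n, n.choose km.1 •
      (((List.range km.1).map (fun j : ℕ => D - U + ((j : K) * l) • (1 : A))).prod * U ^ km.2) :=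
  (Nat.sum_antidiagonal_eq_sum_range_succ
    (fun k m => n.choose k •
      (((List.range k).map (fun j : ℕ => D - U + ((j : K) * l) • (1 : A))).prod * U ^ m)) n).symm

theorem binomB_eq_prod_of_commutator (h : D * U - U * D = l • U) (n : ℕ) :
    binomB n l U D = ((List.range n).map (fun i : ℕ => D + ((i : K) * l) • (1 : A))).prod := by
  set P : ℕ → A := fun k => ((List.range k).map (fun j : ℕ => D - U + ((j : K) * l) • (1 : A))).prod
  have hP (k : ℕ) : P (k + 1) = P k * (D - U + ((k : K) * l) • 1) := by
    simp only [P, List.range_succ, List.map_append, List.prod_append, List.map_cons, List.map_nil,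
      List.prod_cons, List.prod_nil, mul_one]
  induction n with
  | zero => simp [binomB]
  | succ n ih =>
    calc binomB (n + 1) l U D
        = ∑ km ∈ antidiagonal n, n.choose km.1 • (P km.1 * U ^ (km.2 + 1))
          + ∑ km ∈ antidiagonal n, n.choose km.2 • (P (km.1 + 1) * U ^ km.2) :=
          (binomB_eq_sum_antidiagonal _).trans
            (sum_antidiagonal_choose_succ_nsmul (fun k m => P k * U ^ m) n)
      _ = ∑ km ∈ antidiagonal n, n.choose km.1 •
            (P km.1 * U ^ km.2 * (D + ((n : K) * l) • 1)) := by
          rw [← sum_add_distrib]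
          refine sum_congr rfl fun km hkm => ?_
          rw [HasAntidiagonal.mem_antidiagonal] at hkm
          rw [← Nat.choose_symm_of_eq_add hkm.symm, ← smul_add, mul_assoc,
            pow_mul_add_smul_one_of_add_eq h hkm, hP, mul_assoc (P km.1), ← mul_add, add_comm (U ^ _)]
      _ = binomB n l U D * (D + ((n : K) * l) • 1) := by
          rw [binomB_eq_sum_antidiagonal, sum_mul]
          simp only [smul_mul_assoc, P]
      _ = ((List.range (n + 1)).map (fun i : ℕ => D + ((i : K) * l) • (1 : A))).prod := by
          rw [ih, List.range_succ, List.map_append, List.prod_append]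
          simp

end Commutator

lemma Module.End.list_prod_map_add_smul_one_apply {R M ι : Type*} [CommRing R] [AddCommGroup M]
    [Module R M] {T : Module.End R M} {v : M} {c : R} (hv : T v = c • v) (s : List ι) (f : ι → R) :
    (s.map fun i => T + f i • 1).prod v = (s.map fun i => c + f i).prod • v := by
  have hprod : (s.map fun i => T + f i • 1).prod = aeval T (s.map fun i => X + C (f i)).prod := by
    simp [map_list_prod, List.map_map, Function.comp_def, Algebra.algebraMap_eq_smul_one]
  rw [hprod, Module.End.aeval_apply_of_mem_apply_eq_smul hv]
  simp [eval_list_prod, List.map_map, Function.comp_def]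

lemma hasDerivAt_cexp_mul_ofReal (c : ℂ) (x : ℝ) :
    HasDerivAt (fun y : ℝ => Complex.exp (c * y)) (c * Complex.exp (c * x)) x := by
  simpa [mul_comm] using ((Complex.ofRealCLM.hasDerivAt (x := x)).const_mul c).cexp

lemma Dop_exp (c : ℂ) :
    Dop ⟨fun x : ℝ => Complex.exp (c * x), smoothC_mem _ (expSmooth c)⟩
      = c • ⟨fun x : ℝ => Complex.exp (c * x), smoothC_mem _ (expSmooth c)⟩ := by
  ext x
  exact (hasDerivAt_cexp_mul_ofReal c x).deriv

lemma Dop_mul_Mop_exp_sub (l : ℂ) :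
    Dop * Mop (fun x : ℝ => Complex.exp (l * x)) (expSmooth l)
      - Mop (fun x : ℝ => Complex.exp (l * x)) (expSmooth l) * Dop
    = l • Mop (fun x : ℝ => Complex.exp (l * x)) (expSmooth l) := by
  ext f x
  have hf : HasDerivAt (f : ℝ → ℂ) (deriv f x) x :=
    ((smoothC_contDiff f).differentiable (by simp) x).hasDerivAt
  show deriv ((fun y : ℝ => Complex.exp (l * y)) * (f : ℝ → ℂ)) x
      - Complex.exp (l * x) * deriv f x = l * (Complex.exp (l * x) * (f : ℝ → ℂ) x)
  rw [((hasDerivAt_cexp_mul_ofReal l x).mul hf).deriv]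
  ring

/-- `B(n, λ, Ẽ_λ, d/dx)` annihilates `e^{-jλx}` for `0 ≤ j ≤ n-1`. -/
theorem binomB_exp_annihilates (l : ℂ) (n j : ℕ) (hn : 0 < n) (hj : j ≤ n - 1) :
    binomB n l (Mop (fun x : ℝ => Complex.exp (l * x)) (expSmooth l)) Dop
      ⟨fun x : ℝ => Complex.exp ((-(j : ℂ) * l) * x),
        smoothC_mem _ (expSmooth (-(j : ℂ) * l))⟩ = 0 := by
  rw [binomB_eq_prod_of_commutator (Dop_mul_Mop_exp_sub l),
    Module.End.list_prod_map_add_smul_one_apply (Dop_exp _), List.prod_eq_zero, zero_smul]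
  simp only [List.mem_map, List.mem_range]
  exact ⟨j, by omega, by ring⟩
end

section
/- Let D = d/dx act on smooth complex-valued functions on ℝ and let S denote multiplication by sin(λx), λ ∈ ℝ. Then for every odd natural number n, B(n, iλ, S, D) applied to the constant function 1 is identically zero; i.e., Σ_{k=0}^{n} C(n,k) [(D - S)∘(D - S + iλ)∘…∘(D - S + i(k-1)λ)] (sin^{n-k}(λx)) = 0. -/
lemma sinSmooth (l : ℝ) : ContDiff ℝ (⊤ : ℕ∞) (fun x : ℝ => Complex.sin ((l : ℂ) * x)) :=
  ((Complex.contDiff_sin (n := (⊤ : ℕ∞))).restrict_scalars ℝ).comp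
    (contDiff_const.mul Complex.ofRealCLM.contDiff)

/-!
Put `μ = iλ`. Then `sin(λx) = X + Y` with `X = -(i/2) e^{μx}` and `Y = (i/2) e^{-μx}` (as
multiplication operators), and `D X = X (D + μ)`, `D Y = Y (D - μ)`, `X Y = Y X`; everything else is
algebra in these relations and `D 1 = 0`. Start the rising products at a shift `c`:
`B_c(n) = ∑ C(n,k) (A + cμ) ⋯ (A + (c+k-1)μ) U^{n-k}` with `A = D - U`. Moving a factor `X`
(resp. `Y`) to the left through the products shifts `c` by `+1` (resp. `-1`), so the `X`-terms
cancel in Pascal's rule and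
`B_c(n+1) = (D + cμ) B_{c+1}(n) + Y (B_{c-1}(n) - B_{c+1}(n))`.
Since `Y^m 1` is a `D`-eigenvector with eigenvalue `-mμ`, induction gives
`B_c(n) 1 = ∑_m C(n,2m) (2m-1)!! (-2)^m μ^{n-m} (c)_{n-2m} Y^m 1`,
and for odd `n` every rising factorial `(0)_{n-2m}` has a factor `0`.
-/

open Finset Polynomial

section Operator
variable {K R : Type*} [CommRing K] [Ring R] [Algebra K R]

def risingProd (a : R) (μ c : K) (k : ℕ) : R :=
  ((List.range k).map fun j : ℕ => a + ((c + j) * μ) • (1 : R)).prod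

lemma risingProd_zero (a : R) (μ c : K) : risingProd a μ c 0 = 1 := rfl

lemma risingProd_succ (a : R) (μ c : K) (k : ℕ) :
    risingProd a μ c (k + 1) = (a + (c * μ) • 1) * risingProd a μ (c + 1) k := by
  simp only [risingProd, List.range_succ_eq_map, List.map_cons, List.map_map, List.prod_cons,
    Nat.cast_zero, add_zero]
  congr 3
  ext j
  simp only [Function.comp_apply, Nat.cast_succ]
  ring_nf

lemma risingProd_mul_of_mul_eq {a x : R} {μ d : K} (h : a * x = x * (a + (d * μ) • 1)) (c : K)
    (k : ℕ) : risingProd a μ c k * x = x * risingProd a μ (c + d) k := by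
  induction k generalizing c with
  | zero => simp [risingProd_zero]
  | succ k ih =>
    have hfactor : (a + (c * μ) • 1) * x = x * (a + ((c + d) * μ) • 1) := by
      simp only [add_mul, mul_add, h, smul_one_mul, mul_smul_one, add_smul]
      abel
    rw [risingProd_succ, risingProd_succ, mul_assoc, ih, ← mul_assoc, hfactor, mul_assoc,
      add_right_comm]

lemma mul_pow_eq_pow_mul_sub {D Y : R} {μ : K} (hY : D * Y = Y * (D - μ • 1)) (m : ℕ) :
    D * Y ^ m = Y ^ m * (D - (m * μ) • 1) := by
  induction m with
  | zero => simp
  | succ m ih =>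
    rw [pow_succ, ← mul_assoc, ih, mul_assoc, sub_mul, hY, mul_assoc]
    push_cast
    simp only [mul_sub, smul_one_mul, mul_smul_comm, add_mul, add_smul, one_mul, mul_one, mul_add]
    abel

def binomShift (n : ℕ) (μ c : K) (U D : R) : R :=
  ∑ ij ∈ antidiagonal n, n.choose ij.1 • (risingProd (D - U) μ c ij.1 * U ^ ij.2)

lemma binomShift_zero (μ c : K) (U D : R) : binomShift 0 μ c U D = 1 := by
  simp [binomShift, risingProd_zero]

lemma binomShift_succ (n : ℕ) (μ c : K) (U D : R) :
    binomShift (n + 1) μ c U D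
      = ∑ ij ∈ antidiagonal n, n.choose ij.1 • (risingProd (D - U) μ c ij.1 * U * U ^ ij.2)
        + (D - U + (c * μ) • 1) * binomShift n μ (c + 1) U D := by
  rw [binomShift, sum_antidiagonal_choose_succ_nsmul
    (fun i j => risingProd (D - U) μ c i * U ^ j), binomShift, mul_sum]
  congr 1
  · simp only [pow_succ', mul_assoc]
  · refine sum_congr rfl fun ij hij => ?_
    rw [Nat.choose_symm_of_eq_add (mem_antidiagonal.mp hij).symm, risingProd_succ, mul_smul_comm,
      mul_assoc]

lemma binomShift_add_succ {D X Y : R} {μ : K} (hX : D * X = X * (D + μ • 1))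
    (hY : D * Y = Y * (D - μ • 1)) (hXY : Commute X Y) (n : ℕ) (c : K) :
    binomShift (n + 1) μ c (X + Y) D
      = (D + (c * μ) • 1) * binomShift n μ (c + 1) (X + Y) D
        + Y * (binomShift n μ (c - 1) (X + Y) D - binomShift n μ (c + 1) (X + Y) D) := by
  have hX' : (D - (X + Y)) * X = X * (D - (X + Y) + (1 * μ) • 1) := by
    rw [sub_mul, hX, add_mul, ← hXY.eq, one_mul]; noncomm_ring
  have hY' : (D - (X + Y)) * Y = Y * (D - (X + Y) + (-1 * μ) • 1) := by
    rw [sub_mul, hY, add_mul, hXY.eq, neg_one_mul, neg_smul]; noncomm_ring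
  have hsplit : ∀ k, risingProd (D - (X + Y)) μ c k * (X + Y)
      = X * risingProd (D - (X + Y)) μ (c + 1) k + Y * risingProd (D - (X + Y)) μ (c - 1) k := by
    intro k
    rw [mul_add, risingProd_mul_of_mul_eq hX', risingProd_mul_of_mul_eq hY', ← sub_eq_add_neg]
  rw [binomShift_succ]
  simp only [hsplit, add_mul, mul_assoc, smul_add, sum_add_distrib, ← mul_smul_comm, ← mul_sum]
  simp only [binomShift]
  noncomm_ring

end Operator

lemma binomB_eq_binomShift {K R : Type*} [Field K] [Ring R] [Algebra K R] (n : ℕ) (μ : K)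
    (U D : R) : binomB n μ U D = binomShift n μ 0 U D := by
  rw [binomShift, Nat.sum_antidiagonal_eq_sum_range_succ_mk]
  simp [binomB, risingProd]

-- the number of `m`-edge matchings of the complete graph on `n` vertices
def matchingCount (n m : ℕ) : ℕ := n.choose (2 * m) * ∏ i ∈ range m, (2 * i + 1)

lemma matchingCount_of_lt {n m : ℕ} (h : n < 2 * m) : matchingCount n m = 0 := by
  simp [matchingCount, Nat.choose_eq_zero_of_lt h]

lemma matchingCount_succ_succ (n m : ℕ) :
    matchingCount (n + 1) (m + 1) = matchingCount n (m + 1) + (n - 2 * m) * matchingCount n m := by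
  have h := Nat.choose_succ_right_eq n (2 * m)
  simp only [matchingCount, prod_range_succ, show 2 * (m + 1) = 2 * m + 1 + 1 by ring,
    Nat.choose_succ_succ']
  linear_combination (∏ i ∈ range m, (2 * i + 1)) * h

lemma two_mul_succ_mul_matchingCount_succ (n m : ℕ) :
    2 * (m + 1) * matchingCount n (m + 1) = (n - 2 * m) * (n - 2 * m - 1) * matchingCount n m := by
  have h₁ := Nat.choose_succ_right_eq n (2 * m)
  have h₂ := Nat.choose_succ_right_eq n (2 * m + 1)
  simp only [matchingCount, prod_range_succ, Nat.sub_sub, show 2 * (m + 1) = 2 * m + 1 + 1 by ring]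
  linear_combination (∏ i ∈ range m, (2 * i + 1)) * ((2 * m + 1) * h₂ + (n - (2 * m + 1)) * h₁)

lemma ascPochhammer_succ_eval_left {S : Type*} [CommSemiring S] (n : ℕ) (c : S) :
    (ascPochhammer S (n + 1)).eval c = c * (ascPochhammer S n).eval (c + 1) := by
  simp [ascPochhammer_succ_left, eval_comp]

section Coeff
variable {K : Type*} [CommRing K]

noncomputable def binomShiftCoeff (μ : K) (n m : ℕ) (c : K) : K :=
  matchingCount n m * (-2) ^ m * μ ^ (n - m) * (ascPochhammer K (n - 2 * m)).eval c

lemma binomShiftCoeff_of_lt (μ c : K) {n m : ℕ} (h : n < 2 * m) : binomShiftCoeff μ n m c = 0 := by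
  simp [binomShiftCoeff, matchingCount_of_lt h]

lemma binomShiftCoeff_succ_zero (μ c : K) (n : ℕ) :
    binomShiftCoeff μ (n + 1) 0 c = c * μ * binomShiftCoeff μ n 0 (c + 1) := by
  simp only [binomShiftCoeff, matchingCount, Nat.sub_zero, mul_zero, ascPochhammer_succ_eval_left,
    Nat.choose_zero_right]
  ring

lemma binomShiftCoeff_succ_succ (μ c : K) (n m : ℕ) :
    binomShiftCoeff μ (n + 1) (m + 1) c
      = (c - (m + 1)) * μ * binomShiftCoeff μ n (m + 1) (c + 1)
        + (binomShiftCoeff μ n m (c - 1) - binomShiftCoeff μ n m (c + 1)) := by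
  rcases lt_or_ge n (2 * m + 1) with h | h
  · simp [binomShiftCoeff, matchingCount_of_lt (by omega : n + 1 < 2 * (m + 1)),
      matchingCount_of_lt (by omega : n < 2 * (m + 1)),
      Nat.sub_eq_zero_of_le (by omega : n ≤ 2 * m)]
  obtain ⟨s, rfl⟩ := Nat.exists_eq_add_of_le h
  have h₁ := matchingCount_succ_succ (2 * m + 1 + s) m
  rcases s with _ | s
  · have h₀ := matchingCount_of_lt (by omega : 2 * m + 1 + 0 < 2 * (m + 1))
    simp only [binomShiftCoeff, h₀, zero_add, one_mul, ascPochhammer_zero, ascPochhammer_one,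
      eval_one, eval_X, show 2 * m + 1 + 0 + 1 - 2 * (m + 1) = 0 by omega,
      show 2 * m + 1 + 0 - 2 * m = 1 by omega] at h₁ ⊢
    rw [h₁]
    push_cast
    ring
  · have h₂ := two_mul_succ_mul_matchingCount_succ (2 * m + 1 + (s + 1)) m
    simp only [binomShiftCoeff, show 2 * m + 1 + (s + 1) + 1 - 2 * (m + 1) = s + 1 by omega,
      show 2 * m + 1 + (s + 1) - 2 * (m + 1) = s by omega,
      show 2 * m + 1 + (s + 1) - 2 * m = s + 2 by omega, show s + 2 - 1 = s + 1 by omega,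
      show 2 * m + 1 + (s + 1) + 1 - (m + 1) = m + s + 2 by omega,
      show 2 * m + 1 + (s + 1) - (m + 1) = m + s + 1 by omega,
      show 2 * m + 1 + (s + 1) - m = m + s + 2 by omega] at h₁ h₂ ⊢
    rw [ascPochhammer_succ_eval (s + 1) (c + 1), ascPochhammer_succ_eval s (c + 1)]
    simp only [ascPochhammer_succ_eval_left, sub_add_cancel]
    have h₁' : (_ : K) = _ := congrArg (Nat.cast : ℕ → K) h₁
    have h₂' : (_ : K) = _ := congrArg (Nat.cast : ℕ → K) h₂
    push_cast at h₁' h₂' ⊢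
    linear_combination (-2) ^ m * μ ^ (m + s + 2) * (ascPochhammer K s).eval (c + 1) *
      (-2 * c * h₁' - h₂')

lemma binomShiftCoeff_zero_of_odd (μ : K) {n : ℕ} (hn : Odd n) (m : ℕ) :
    binomShiftCoeff μ n m 0 = 0 := by
  rcases lt_or_ge n (2 * m) with h | h
  · exact binomShiftCoeff_of_lt μ 0 h
  · obtain ⟨k, rfl⟩ := hn
    simp [binomShiftCoeff, ascPochhammer_ne_zero_eval_zero K (by omega : 2 * k + 1 - 2 * m ≠ 0)]

end Coeff

section Apply
variable {K M : Type*} [CommRing K] [AddCommGroup M] [Module K M]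

lemma apply_pow_apply_eq_smul {D Y : Module.End K M} {μ : K} (hY : D * Y = Y * (D - μ • 1))
    {v : M} (hv : D v = 0) (m : ℕ) : D ((Y ^ m) v) = (-(m * μ)) • (Y ^ m) v := by
  rw [← Module.End.mul_apply, mul_pow_eq_pow_mul_sub hY, Module.End.mul_apply, LinearMap.sub_apply,
    hv, LinearMap.smul_apply, Module.End.one_apply, zero_sub, map_neg, map_smul, neg_smul]

theorem binomShift_add_apply_eq_sum {D X Y : Module.End K M} {μ : K}
    (hX : D * X = X * (D + μ • 1)) (hY : D * Y = Y * (D - μ • 1)) (hXY : Commute X Y) {v : M}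
    (hv : D v = 0) (n : ℕ) (c : K) :
    binomShift n μ c (X + Y) D v = ∑ m ∈ range (n + 1), binomShiftCoeff μ n m c • (Y ^ m) v := by
  induction n generalizing c with
  | zero => simp [binomShift_zero, binomShiftCoeff, matchingCount]
  | succ n ih =>
    have hD : (D + (c * μ) • 1) (∑ m ∈ range (n + 1), binomShiftCoeff μ n m (c + 1) • (Y ^ m) v)
        = ∑ m ∈ range (n + 1), ((c - m) * μ * binomShiftCoeff μ n m (c + 1)) • (Y ^ m) v := by
      simp only [map_sum, map_smul, LinearMap.add_apply, apply_pow_apply_eq_smul hY hv,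
        LinearMap.smul_apply, Module.End.one_apply]
      refine sum_congr rfl fun m _ => ?_
      module
    have hYsum : Y (∑ m ∈ range (n + 1), binomShiftCoeff μ n m (c - 1) • (Y ^ m) v
          - ∑ m ∈ range (n + 1), binomShiftCoeff μ n m (c + 1) • (Y ^ m) v)
        = ∑ m ∈ range (n + 1),
            (binomShiftCoeff μ n m (c - 1) - binomShiftCoeff μ n m (c + 1)) • (Y ^ (m + 1)) v := by
      simp only [← sum_sub_distrib, ← sub_smul, map_sum, map_smul, pow_succ', Module.End.mul_apply]
    rw [binomShift_add_succ hX hY hXY, LinearMap.add_apply, Module.End.mul_apply,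
      Module.End.mul_apply, LinearMap.sub_apply, ih, ih, hD, hYsum, sum_range_succ' _ (n + 1),
      sum_range_succ' _ n]
    simp only [binomShiftCoeff_succ_succ, binomShiftCoeff_succ_zero, add_smul, sum_add_distrib,
      sum_range_succ _ n, binomShiftCoeff_of_lt μ _ (by omega : n < 2 * (n + 1)), mul_zero,
      zero_smul]
    push_cast
    simp only [sub_zero, pow_zero]
    abel

end Apply

theorem binomB_add_apply_eq_zero_of_odd {K M : Type*} [Field K] [AddCommGroup M] [Module K M]
    {D X Y : Module.End K M} {μ : K} (hX : D * X = X * (D + μ • 1)) (hY : D * Y = Y * (D - μ • 1))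
    (hXY : Commute X Y) {v : M} (hv : D v = 0) {n : ℕ} (hn : Odd n) :
    binomB n μ (X + Y) D v = 0 := by
  rw [binomB_eq_binomShift, binomShift_add_apply_eq_sum hX hY hXY hv]
  exact sum_eq_zero fun m _ => by rw [binomShiftCoeff_zero_of_odd μ hn, zero_smul]

noncomputable def expMul (c : ℂ) : Module.End ℂ SmoothC :=
  Mop (fun x : ℝ => Complex.exp (c * x)) (expSmooth c)

lemma Dop_mul_smul_expMul (a c : ℂ) : Dop * (a • expMul c) = (a • expMul c) * (Dop + c • 1) := by
  ext f x
  have hexp : HasDerivAt (fun y : ℝ => Complex.exp (c * y)) (Complex.exp (c * x) * c) x := by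
    simpa using ((Complex.ofRealCLM.hasDerivAt (x := x)).const_mul c).cexp
  have hf := (((smoothC_contDiff f).differentiable (by simp)) x).hasDerivAt
  show deriv (fun y : ℝ => a * (Complex.exp (c * y) * (f : ℝ → ℂ) y)) x
    = a * (Complex.exp (c * x) * (deriv f x + c * (f : ℝ → ℂ) x))
  refine ((hexp.mul hf).const_mul a).deriv.trans ?_
  ring

lemma expMul_commute (c d : ℂ) : Commute (expMul c) (expMul d) := by
  ext f x
  exact mul_left_comm _ _ _

lemma Mop_sin_eq (l : ℝ) :
    Mop (fun x : ℝ => Complex.sin ((l : ℂ) * x)) (sinSmooth l)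
      = (-(Complex.I / 2)) • expMul (Complex.I * l)
        + (Complex.I / 2) • expMul (-(Complex.I * l)) := by
  ext f x
  show Complex.sin (l * x) * (f : ℝ → ℂ) x
    = -(Complex.I / 2) * (Complex.exp (Complex.I * l * x) * (f : ℝ → ℂ) x)
      + Complex.I / 2 * (Complex.exp (-(Complex.I * l) * x) * (f : ℝ → ℂ) x)
  rw [Complex.sin]
  ring_nf

lemma Dop_const_one : Dop ⟨fun _ : ℝ => (1 : ℂ), smoothC_mem _ contDiff_const⟩ = 0 := by
  ext x
  exact deriv_const x 1

/-- For odd `n`, `B(n, iλ, sin(λx)·, d/dx)` applied to the constant function `1` is zero. -/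
theorem binomB_sin_odd_vanishes (l : ℝ) (n : ℕ) (hn : Odd n) :
    binomB n (Complex.I * (l : ℂ))
      (Mop (fun x : ℝ => Complex.sin ((l : ℂ) * x)) (sinSmooth l)) Dop
      ⟨fun _ : ℝ => (1 : ℂ), smoothC_mem _ contDiff_const⟩ = 0 := by
  have hY : Dop * ((Complex.I / 2) • expMul (-(Complex.I * l)))
      = ((Complex.I / 2) • expMul (-(Complex.I * l))) * (Dop - (Complex.I * l) • 1) := by
    rw [Dop_mul_smul_expMul]
    congr 1
    module
  rw [Mop_sin_eq]
  exact binomB_add_apply_eq_zero_of_odd (Dop_mul_smul_expMul _ _) hY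
    (((expMul_commute _ _).smul_left _).smul_right _) Dop_const_one hn
end
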